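/- Let R be a p-henselian commutative ring additively generated by its units. If p is odd then V^2 K_2(R) ⊆ p·K_2(R); in general V^3 K_2(R) ⊆ p·K_2(R); and if p = 2 and the Artin–Schreier map x ↦ x^2 + x is surjective on R/2R, then V^2 K_2(R) ⊆ 2·K_2(R). -/

import Mathlib

/-- A ring is additively generated by its units. -/
def AddGenByUnits (R : Type) [CommRing R] : Prop :=
  AddSubgroup.closure {x : R | IsUnit x} = ⊤
/-! ## `K₂` with Dennis–Stein and Steinberg symbols

Quillen's `K₂` is not available in Mathlib.  We axiomatise the structure actually used:
an abelian group equipped with Dennis–Stein symbols `⟨a,b⟩` (older sign convention) and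
Steinberg symbols `{a,b}` satisfying the relations (D1)–(D5), bilinearity and the
Steinberg relation. -/

structure DennisSteinK2 (R : Type) [CommRing R] where
  K2 : Type
  [grp : AddCommGroup K2]
  /-- the Dennis–Stein symbol `⟨a,b⟩` (meaningful when `1 + ab` is a unit) -/
  ds : R → R → K2
  /-- the Steinberg symbol `{a,b}` -/
  st : Rˣ → Rˣ → K2
  D1 : ∀ a b : R, IsUnit (1 + a * b) → ds a b = - ds (-b) (-a)
  D2 : ∀ a b c : R, IsUnit (1 + a * b) → IsUnit (1 + a * c) →
    ds a b + ds a c = ds a (b + c + a * b * c)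
  D3 : ∀ a b c : R, IsUnit (1 + a * b * c) → ds a (b * c) = ds (a * b) c + ds (a * c) b
  /-- (D4): `⟨a,b⟩ = {1+ab, b}` when `b` and `1+ab` are units -/
  D4 : ∀ (a : R) (b u : Rˣ), (u : R) = 1 + a * b → ds a (b : R) = st u b
  /-- (D5): `⟨a,b⟩ = {−(1+a)/(1−b), (1+ab)/(1−b)}` when `1+a`, `1−b`, `1+ab` are units -/
  D5 : ∀ (a b : R) (x y : Rˣ), IsUnit (1 - b) → (x : R) * (1 - b) = -(1 + a) →
    (y : R) * (1 - b) = 1 + a * b → ds a b = st x y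
  st_mul_left : ∀ a a' b : Rˣ, st (a * a') b = st a b + st a' b
  st_mul_right : ∀ a b b' : Rˣ, st a (b * b') = st a b + st a b'
  steinberg : ∀ a b : Rˣ, (a : R) + (b : R) = 1 → st a b = 0

attribute [instance] DennisSteinK2.grp

/-- The unit filtration `U^i K₂(R)`: the subgroup generated by Steinberg symbols `{a,b}`
with `a` or `b` in `1 + pⁱR`. -/
def DennisSteinK2.U {R : Type} [CommRing R] (K : DennisSteinK2 R) (p i : ℕ) :
    AddSubgroup K.K2 :=
  AddSubgroup.closure
    {z | ∃ a b : Rˣ, ((∃ c : R, (a : R) = 1 + (p : R) ^ i * c) ∨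
      (∃ c : R, (b : R) = 1 + (p : R) ^ i * c)) ∧ z = K.st a b}

/-- The modified filtration `V^i K₂(R)`: it agrees with `U^i K₂(R)` except when `p = 2` and
`i = 2`, where the Dennis–Stein symbols `⟨2c,2⟩` are added. -/
def DennisSteinK2.V {R : Type} [CommRing R] (K : DennisSteinK2 R) (p i : ℕ) :
    AddSubgroup K.K2 :=
  if p = 2 ∧ i = 2 then
    K.U p 2 ⊔ AddSubgroup.closure {z | ∃ c : R, z = K.ds ((p : R) * c) (p : R)}
  else K.U p i

/-!
For `m ∈ pⁱR` all elements `1 + m r` are units. By (D2) and (D3),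
`⟨m, x + y⟩ = ⟨m, x⟩ + ⟨m y, u⁻¹⟩ + ⟨m u⁻¹, y⟩` with `u = 1 + m x`, so, `R` being additively
generated by its units, it suffices to show `⟨m, v⟩ ∈ p K₂(R)` for `v` a unit. By (D1)
`⟨m, v⟩ = -⟨-v, -m⟩`, and if `1 + v m = w ^ p` then (D2) gives `⟨-v, -m⟩ = p ⟨-v, (w - 1) / (-v)⟩`.
Such `p`-th roots `w = 1 + p t` exist by Hensel's lemma applied to `G = ((1 + pX) ^ p - 1) / p²`,
whose derivative is `≡ 1 mod p`: `G(t) = d` is solvable once it is solvable mod `p`, which is the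
case for `d ∈ pR`, for all `d` when `p` is odd (`G ≡ X`), and for all `d` when `p = 2`
(`G = X + X²`) and Artin–Schreier is surjective. By (D4) the Steinberg generators of `Uⁱ` are such
Dennis–Stein symbols, and the extra generator `⟨2c, 2⟩ = -⟨-2, -2c⟩` of `V²` differs from
`2 ⟨-2, b⟩`, for `b² + b ≡ c mod 2`, by the symbol `⟨-2, 4y⟩` with second entry in `2²R`.
-/

open Polynomial

namespace Polynomial

variable {R : Type*} [CommRing R]

/-- `X ^ (n + 1) * g (e / X) / e` for `e = g.coeff 0` and `n = g.natDegree`. -/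
noncomputable def scaledReverse (g : R[X]) : R[X] :=
  X ^ (g.natDegree + 1) +
    ∑ j ∈ Finset.range (g.natDegree + 1),
      C (g.coeff (j + 1) * g.coeff 0 ^ j) * X ^ (g.natDegree - j)

theorem scaledReverse_monic (g : R[X]) : g.scaledReverse.Monic := by
  refine monic_X_pow_add (lt_of_le_of_lt (degree_sum_le _ _) ?_)
  refine (Finset.sup_lt_iff (WithBot.bot_lt_coe _)).2 fun j _ => ?_
  exact (degree_C_mul_X_pow_le _ _).trans_lt (by exact_mod_cast Nat.lt_succ_of_le (Nat.sub_le _ _))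

theorem eval_coeff_zero_mul_eq_mul_eval_scaledReverse (g : R[X]) {x s : R} (hxs : s * x = 1) :
    g.eval (g.coeff 0 * s) = g.coeff 0 * s ^ (g.natDegree + 1) * g.scaledReverse.eval x := by
  have hsx : ∀ k, s ^ k * x ^ k = 1 := fun k => by rw [← mul_pow, hxs, one_pow]
  have hterm : ∀ j ∈ Finset.range (g.natDegree + 1),
      g.coeff 0 * s ^ (g.natDegree + 1) * (g.coeff (j + 1) * g.coeff 0 ^ j * x ^ (g.natDegree - j))
        = g.coeff (j + 1) * (g.coeff 0 * s) ^ (j + 1) := by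
    intro j hj
    have hs : s ^ (g.natDegree + 1) = s ^ (j + 1) * s ^ (g.natDegree - j) := by
      rw [← pow_add]; congr 1; simp at hj; omega
    rw [hs, mul_pow, pow_succ (g.coeff 0) j]
    linear_combination (g.coeff (j + 1) * g.coeff 0 ^ j * g.coeff 0 * s ^ (j + 1)) *
      hsx (g.natDegree - j)
  rw [eval_eq_sum_range' (Nat.lt_succ_of_lt (Nat.lt_succ_self _)), Finset.sum_range_succ',
    scaledReverse, eval_add, eval_finsetSum, mul_add, Finset.mul_sum]
  simp only [eval_mul, eval_C, eval_pow, eval_X]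
  rw [Finset.sum_congr rfl hterm]
  linear_combination (-g.coeff 0) * hsx (g.natDegree + 1)

theorem map_scaledReverse {S : Type*} [CommRing S] (g : R[X]) (f : R →+* S)
    (h : f (g.coeff 0) = 0) :
    g.scaledReverse.map f = X ^ (g.natDegree + 1) + C (f (g.coeff 1)) * X ^ g.natDegree := by
  simp [scaledReverse, Polynomial.map_sum, Finset.sum_range_succ', h]

theorem eval_neg_derivative_X_pow_add_C_mul_X_pow (c : R) (n : ℕ) :
    (derivative (X ^ (n + 1) + C c * X ^ n)).eval (-c) = (-c) ^ n := by
  rcases n with _ | n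
  · simp
  · simp only [derivative_add, derivative_X_pow, derivative_C_mul_X_pow, eval_add, eval_mul,
      eval_C, eval_pow, eval_X]
    push_cast
    ring

end Polynomial

namespace HenselianRing

variable {R : Type*} [CommRing R] {I : Ideal R} [HenselianRing R I]

theorem exists_isRoot_mem_of_coeff_zero_mem (g : R[X]) (h₀ : g.coeff 0 ∈ I)
    (h₁ : IsUnit (Ideal.Quotient.mk I (g.coeff 1))) : ∃ t ∈ I, g.IsRoot t := by
  have hmap := map_scaledReverse g (Ideal.Quotient.mk I) (Ideal.Quotient.eq_zero_iff_mem.2 h₀)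
  have hroot : g.scaledReverse.eval (-g.coeff 1) ∈ I := by
    rw [← Ideal.Quotient.eq_zero_iff_mem, ← eval_map_apply, hmap]
    simp only [eval_add, eval_mul, eval_C, eval_pow, eval_X, map_neg]
    ring
  have hsimple : IsUnit (Ideal.Quotient.mk I (g.scaledReverse.derivative.eval (-g.coeff 1))) := by
    rw [← eval_map_apply, ← derivative_map, hmap, map_neg,
      eval_neg_derivative_X_pow_add_C_mul_X_pow]
    exact h₁.neg.pow _
  obtain ⟨x, hx, hxc⟩ := is_henselian _ (scaledReverse_monic g) _ hroot hsimple
  have : IsLocalHom (Ideal.Quotient.mk I) := isLocalHom_of_le_jacobson_bot I jac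
  obtain ⟨u, rfl⟩ : IsUnit x := by
    refine IsUnit.of_map (Ideal.Quotient.mk I) _ ?_
    rw [Ideal.Quotient.eq.2 hxc]
    exact h₁.neg
  refine ⟨g.coeff 0 * ↑u⁻¹, I.mul_mem_right _ h₀, ?_⟩
  rw [IsRoot, eval_coeff_zero_mul_eq_mul_eval_scaledReverse g u.inv_mul, hx.eq_zero, mul_zero]

theorem exists_isRoot_sub_mem (f : R[X]) (a₀ : R) (h₀ : f.eval a₀ ∈ I)
    (h₁ : IsUnit (Ideal.Quotient.mk I (f.derivative.eval a₀))) :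
    ∃ a, f.IsRoot a ∧ a - a₀ ∈ I := by
  set g := f.comp (X + C a₀)
  have hcoeff₀ : g.coeff 0 = f.eval a₀ := by simp [g, coeff_zero_eq_eval_zero]
  have hcoeff₁ : g.coeff 1 = f.derivative.eval a₀ := by
    simpa [g, coeff_zero_eq_eval_zero, derivative_comp] using (coeff_derivative g 0).symm
  obtain ⟨t, ht, hroot⟩ := exists_isRoot_mem_of_coeff_zero_mem g (hcoeff₀ ▸ h₀) (hcoeff₁ ▸ h₁)
  exact ⟨t + a₀, by simpa [g] using hroot, by simpa using ht⟩

end HenselianRing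

namespace Polynomial

variable (p : ℕ) (R : Type*) [CommRing R]

/-- `((1 + p X) ^ p - 1) / p²`, written without division. -/
noncomputable def pthPowerQuotient : R[X] :=
  X + ∑ k ∈ Finset.range (p - 1), C ((p.choose (k + 2) * p ^ k : ℕ) : R) * X ^ (k + 2)

variable {p R}

theorem one_add_mul_pow_eq (t : R) :
    (1 + p * t) ^ p = 1 + p ^ 2 * (pthPowerQuotient p R).eval t := by
  rcases lt_or_ge p 2 with hp | hp
  · interval_cases p <;> simp [pthPowerQuotient]
  rw [add_comm, add_pow, show p + 1 = p - 1 + 1 + 1 by omega, Finset.sum_range_succ',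
    Finset.sum_range_succ']
  simp only [pthPowerQuotient, eval_add, eval_X, eval_finsetSum, eval_mul, eval_C, eval_pow,
    mul_add, Finset.mul_sum]
  have hterm : ∀ k ∈ Finset.range (p - 1),
      (p * t : R) ^ (k + 1 + 1) * 1 ^ (p - (k + 1 + 1)) * (p.choose (k + 1 + 1) : R) =
        p ^ 2 * (((p.choose (k + 2) * p ^ k : ℕ) : R) * t ^ (k + 2)) := fun k _ => by
    push_cast; ring
  rw [Finset.sum_congr rfl hterm]
  simp only [zero_add, pow_one, one_pow, mul_one, Nat.choose_one_right, pow_zero,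
    Nat.choose_zero_right, Nat.cast_one]
  ring

theorem dvd_add_two_mul_choose (k : ℕ) : p ∣ (k + 2) * p.choose (k + 2) := by
  rcases p with _ | n
  · simp
  · rw [mul_comm, ← Nat.add_one_mul_choose_eq]
    exact dvd_mul_right _ _

theorem derivative_eval_sub_one_mem (t : R) :
    (pthPowerQuotient p R).derivative.eval t - 1 ∈ Ideal.span {(p : R)} := by
  simp only [pthPowerQuotient, derivative_add, derivative_X, derivative_sum, derivative_C_mul_X_pow,
    eval_add, eval_one, eval_finsetSum, eval_mul, eval_C, eval_pow, eval_X, add_sub_cancel_left]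
  refine Ideal.sum_mem _ fun k _ => Ideal.mul_mem_right _ _ (Ideal.mem_span_singleton.2 ?_)
  obtain ⟨m, hm⟩ := dvd_add_two_mul_choose (p := p) k
  exact ⟨m * p ^ k, by norm_cast; rw [mul_comm _ (k + 2), ← mul_assoc, hm, mul_assoc]⟩

theorem eval_sub_self_mem_of_odd (hp : Odd p) (t : R) :
    (pthPowerQuotient p R).eval t - t ∈ Ideal.span {(p : R)} := by
  simp only [pthPowerQuotient, eval_add, eval_X, eval_finsetSum, eval_mul, eval_C, eval_pow,
    add_sub_cancel_left]
  refine Ideal.sum_mem _ fun k _ => Ideal.mul_mem_right _ _ (Ideal.mem_span_singleton.2 ?_)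
  refine Nat.cast_dvd_cast ?_
  rcases k with _ | k
  · simpa using (Nat.coprime_two_right.2 hp).dvd_of_dvd_mul_left
      (mul_comm 2 _ ▸ dvd_add_two_mul_choose (p := p) 0)
  · exact dvd_mul_of_dvd_right (dvd_pow_self p k.succ_ne_zero) _

theorem eval_pthPowerQuotient_two (t : R) : (pthPowerQuotient 2 R).eval t = t + t ^ 2 := by
  simp [pthPowerQuotient]

theorem eval_pthPowerQuotient_zero : (pthPowerQuotient p R).eval 0 = 0 := by
  simp [pthPowerQuotient, eval_finsetSum]

end Polynomial

section PthRoots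

variable {p : ℕ} {R : Type*} [CommRing R] [HenselianRing R (Ideal.span {(p : R)})]

theorem isUnit_one_add_mul_of_henselian (r : R) : IsUnit (1 + p * r) := by
  simpa [add_comm] using
    Ideal.mem_jacobson_bot.1 (HenselianRing.jac (Ideal.mem_span_singleton_self _)) r

theorem exists_unit_pow_eq_one_add_sq_mul {d t₀ : R}
    (ht₀ : (pthPowerQuotient p R).eval t₀ - d ∈ Ideal.span {(p : R)}) :
    ∃ u : Rˣ, (u : R) ^ p = 1 + p ^ 2 * d := by
  have hsimple : Ideal.Quotient.mk (Ideal.span {(p : R)})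
      ((pthPowerQuotient p R - C d).derivative.eval t₀) = 1 := by
    rw [derivative_sub, derivative_C, sub_zero, ← map_one (Ideal.Quotient.mk _)]
    exact Ideal.Quotient.eq.2 (derivative_eval_sub_one_mem t₀)
  obtain ⟨t, ht, -⟩ := HenselianRing.exists_isRoot_sub_mem (pthPowerQuotient p R - C d) t₀
    (by simpa using ht₀) (hsimple ▸ isUnit_one)
  have hd : (pthPowerQuotient p R).eval t = d := sub_eq_zero.1 (by simpa using ht)
  exact ⟨(isUnit_one_add_mul_of_henselian (p := p) t).unit, by simp [one_add_mul_pow_eq, hd]⟩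

theorem exists_unit_pow_eq_one_add_of_mem_span_pow_three {x : R}
    (hx : x ∈ Ideal.span {(p : R) ^ 3}) : ∃ u : Rˣ, (u : R) ^ p = 1 + x := by
  obtain ⟨m, rfl⟩ := Ideal.mem_span_singleton'.1 hx
  obtain ⟨u, hu⟩ := exists_unit_pow_eq_one_add_sq_mul (p := p) (d := p * m) (t₀ := 0)
    (by simpa [eval_pthPowerQuotient_zero] using
      Ideal.mul_mem_right m _ (Ideal.mem_span_singleton_self _))
  exact ⟨u, by rw [hu]; ring⟩

theorem exists_unit_pow_eq_one_add_of_mem_span_sq_of_odd (hp : Odd p) {x : R}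
    (hx : x ∈ Ideal.span {(p : R) ^ 2}) : ∃ u : Rˣ, (u : R) ^ p = 1 + x := by
  obtain ⟨m, rfl⟩ := Ideal.mem_span_singleton'.1 hx
  obtain ⟨u, hu⟩ := exists_unit_pow_eq_one_add_sq_mul (eval_sub_self_mem_of_odd hp m)
  exact ⟨u, by rw [hu]; ring⟩

end PthRoots

theorem exists_unit_sq_eq_one_add_of_artinSchreier {R : Type*} [CommRing R]
    [HenselianRing R (Ideal.span {(2 : R)})]
    (hAS : ∀ x : R, ∃ y : R, y ^ 2 + y - x ∈ Ideal.span {(2 : R)}) {x : R}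
    (hx : x ∈ Ideal.span {(2 : R) ^ 2}) : ∃ u : Rˣ, (u : R) ^ 2 = 1 + x := by
  obtain ⟨m, rfl⟩ := Ideal.mem_span_singleton'.1 hx
  obtain ⟨t₀, ht₀⟩ := hAS m
  obtain ⟨u, hu⟩ := exists_unit_pow_eq_one_add_sq_mul (p := 2) (d := m) (t₀ := t₀)
    (by simpa [Polynomial.eval_pthPowerQuotient_two, add_comm t₀] using ht₀)
  exact ⟨u, by rw [hu]; push_cast; ring⟩

theorem isUnit_one_add_of_forall_exists_pow {R : Type*} [CommRing R] {I : Ideal R} {n : ℕ}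
    (hroot : ∀ x ∈ I, ∃ u : Rˣ, (u : R) ^ n = 1 + x) {x : R} (hx : x ∈ I) : IsUnit (1 + x) := by
  obtain ⟨u, hu⟩ := hroot x hx
  exact hu ▸ u.isUnit.pow n

namespace DennisSteinK2

variable {R : Type} [CommRing R] (K : DennisSteinK2 R)

theorem ds_zero_right (a : R) : K.ds a 0 = 0 := by
  simpa using K.D2 a 0 0 (by simp) (by simp)

theorem st_one_right (a : Rˣ) : K.st a 1 = 0 := by
  simpa using K.st_mul_right a 1 1

theorem ds_one_right {a : R} (ha : IsUnit (1 + a)) : K.ds a 1 = 0 := by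
  simpa [st_one_right] using K.D4 a 1 ha.unit (by simp)

theorem ds_one_add_mul {a c : R} (ha : IsUnit (1 + a)) (hc : IsUnit (1 + a * c)) :
    K.ds a (1 + c * (1 + a)) = K.ds a c := by
  have h := K.D2 a 1 c (by simpa using ha) hc
  rw [ds_one_right K ha, zero_add] at h
  rw [h]
  ring_nf

theorem ds_add_right {m x y : R} (u : Rˣ) (hu : (u : R) = 1 + m * x)
    (hy : IsUnit (1 + m * y * ↑u⁻¹)) :
    K.ds m (x + y) = K.ds m x + (K.ds (m * y) ↑u⁻¹ + K.ds (m * ↑u⁻¹) y) := by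
  rw [← K.D3 m y _ hy, K.D2 m x _ (hu ▸ u.isUnit) (by rwa [← mul_assoc])]
  have hinv : (↑u⁻¹ : R) * (1 + m * x) = 1 := by rw [← hu, u.inv_mul]
  congr 1
  linear_combination -y * hinv

theorem nsmul_ds (a : Rˣ) {b : R} (h : IsUnit (1 + a * b)) (n : ℕ) :
    n • K.ds a b = K.ds a (↑a⁻¹ * ((1 + a * b) ^ n - 1)) := by
  induction n with
  | zero => simp [ds_zero_right]
  | succ n ih =>
    have hn : IsUnit (1 + a * (↑a⁻¹ * ((1 + a * b) ^ n - 1))) := by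
      simpa [← mul_assoc] using h.pow n
    rw [succ_nsmul, ih, K.D2 _ _ _ hn h]
    congr 1
    linear_combination -b * a.inv_mul

section Divisibility

variable {I : Ideal R} {n : ℕ} (hroot : ∀ x ∈ I, ∃ u : Rˣ, (u : R) ^ n = 1 + x)
include hroot

theorem ds_mem_range_nsmul_of_isUnit {m : R} (hm : m ∈ I) (v : Rˣ) :
    K.ds m v ∈ (nsmulAddMonoidHom n).range := by
  obtain ⟨u, hu⟩ := hroot (v * m) (I.mul_mem_left _ hm)
  have hb : (1 + ↑(-v) * (↑(-v)⁻¹ * (u - 1)) : R) = u := by simp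
  have hpow : n • K.ds ↑(-v) (↑(-v)⁻¹ * (u - 1)) = K.ds ↑(-v) (-m) := by
    rw [nsmul_ds K _ (by rw [hb]; exact u.isUnit), hb, hu]
    congr 1
    simp [← mul_assoc]
  refine ⟨-K.ds ↑(-v) (↑(-v)⁻¹ * (u - 1)), ?_⟩
  rw [nsmulAddMonoidHom_apply, smul_neg, hpow, Units.val_neg,
    K.D1 m v (by simpa [mul_comm] using
      isUnit_one_add_of_forall_exists_pow hroot (I.mul_mem_left v hm))]

theorem ds_mem_range_nsmul (hgen : AddGenByUnits R) {m : R} (hm : m ∈ I) (r : R) :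
    K.ds m r ∈ (nsmulAddMonoidHom n).range := by
  have hr : r ∈ AddSubgroup.closure {x : R | IsUnit x} := hgen ▸ AddSubgroup.mem_top r
  induction hr using AddSubgroup.closure_induction'' generalizing m with
  | mem x hx =>
    obtain ⟨v, rfl⟩ := hx
    exact ds_mem_range_nsmul_of_isUnit K hroot hm v
  | neg_mem x hx =>
    obtain ⟨v, rfl⟩ := hx
    exact Units.val_neg v ▸ ds_mem_range_nsmul_of_isUnit K hroot hm (-v)
  | zero => simp [ds_zero_right]
  | add x y _ _ ihx ihy =>
    have hx := isUnit_one_add_of_forall_exists_pow hroot (I.mul_mem_right x hm)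
    rw [ds_add_right K hx.unit hx.unit_spec
      (isUnit_one_add_of_forall_exists_pow hroot (I.mul_mem_right _ (I.mul_mem_right y hm)))]
    exact add_mem (ihx hm) (add_mem (ds_mem_range_nsmul_of_isUnit K hroot (I.mul_mem_right y hm) _)
      (ihy (I.mul_mem_right _ hm)))

theorem ds_mem_range_nsmul_of_mem_right (hgen : AddGenByUnits R) {m : R} (hm : m ∈ I) (r : R) :
    K.ds r m ∈ (nsmulAddMonoidHom n).range := by
  rw [K.D1 r m (by simpa [mul_comm] using
    isUnit_one_add_of_forall_exists_pow hroot (I.mul_mem_left r hm))]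
  exact neg_mem (ds_mem_range_nsmul K hroot hgen (neg_mem hm) _)

theorem st_mem_range_nsmul_of_left (hgen : AddGenByUnits R) (a b : Rˣ) (ha : (a : R) - 1 ∈ I) :
    K.st a b ∈ (nsmulAddMonoidHom n).range := by
  rw [← K.D4 ((a - 1) * ↑b⁻¹) b a (by simp [mul_assoc])]
  exact ds_mem_range_nsmul K hroot hgen (I.mul_mem_right _ ha) _

theorem st_mem_range_nsmul_of_right (hgen : AddGenByUnits R) (a b : Rˣ) (hb : (b : R) - 1 ∈ I) :
    K.st a b ∈ (nsmulAddMonoidHom n).range := by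
  set x : R := (a - 1) * ↑b⁻¹
  have hx : IsUnit (1 + x) := by
    refine isUnit_of_mul_isUnit_left (y := (b : R)) ?_
    have : (1 + x) * b = a * (1 + ↑a⁻¹ * (b - 1)) := by
      linear_combination ((a : R) - 1) * b.inv_mul - ((b : R) - 1) * a.mul_inv
    rw [this]
    exact a.isUnit.mul (isUnit_one_add_of_forall_exists_pow hroot (I.mul_mem_left _ hb))
  obtain ⟨w, hw⟩ := hx
  have hc : ((b : R) - 1) * ↑w⁻¹ ∈ I := I.mul_mem_right _ hb
  have hbc : (b : R) = 1 + (b - 1) * ↑w⁻¹ * (1 + x) := by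
    linear_combination (1 - (b : R)) * (hw ▸ w.inv_mul : (↑w⁻¹ : R) * (1 + x) = 1)
  rw [← K.D4 x b a (by simp [x, mul_assoc]), hbc,
    ds_one_add_mul K (hw ▸ w.isUnit)
      (isUnit_one_add_of_forall_exists_pow hroot (I.mul_mem_left x hc))]
  exact ds_mem_range_nsmul_of_mem_right K hroot hgen hc x

end Divisibility

theorem U_le_range_nsmul (hgen : AddGenByUnits R) {p i : ℕ}
    (hroot : ∀ x ∈ Ideal.span {(p : R) ^ i}, ∃ u : Rˣ, (u : R) ^ p = 1 + x) :
    K.U p i ≤ (nsmulAddMonoidHom p).range := by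
  have hmem (c : R) : (p : R) ^ i * c ∈ Ideal.span {(p : R) ^ i} :=
    Ideal.mul_mem_right _ _ (Ideal.mem_span_singleton_self _)
  refine (AddSubgroup.closure_le _).2 ?_
  rintro _ ⟨a, b, ⟨c, hc⟩ | ⟨c, hc⟩, rfl⟩
  · exact st_mem_range_nsmul_of_left K hroot hgen a b
      (by rw [hc, add_sub_cancel_left]; exact hmem c)
  · exact st_mem_range_nsmul_of_right K hroot hgen a b
      (by rw [hc, add_sub_cancel_left]; exact hmem c)

theorem ds_two_mul_two_mem_range_nsmul (hgen : AddGenByUnits R)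
    (h2 : (2 : R) ∈ Ideal.jacobson ⊥)
    (hroot : ∀ x ∈ Ideal.span {(2 : R) ^ 2}, ∃ u : Rˣ, (u : R) ^ 2 = 1 + x)
    (hAS : ∀ x : R, ∃ y : R, y ^ 2 + y - x ∈ Ideal.span {(2 : R)}) (c : R) :
    K.ds (2 * c) 2 ∈ (nsmulAddMonoidHom 2).range := by
  have unit2 (r : R) : IsUnit (1 + 2 * r) := by simpa [add_comm] using Ideal.mem_jacobson_bot.1 h2 r
  obtain ⟨b, hb⟩ := hAS c
  obtain ⟨k, hk⟩ := Ideal.mem_span_singleton.1 hb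
  obtain ⟨v, hv⟩ := unit2 (2 * c)
  set y : R := 4 * (b - k) * ↑v⁻¹
  have hy : y ∈ Ideal.span {(2 : R) ^ 2} :=
    Ideal.mem_span_singleton.2 ⟨(b - k) * ↑v⁻¹, by simp only [y]; ring⟩
  have hsum : K.ds (-2) (-(2 * c)) + K.ds (-2) y = K.ds (-2) b + K.ds (-2) b := by
    rw [K.D2 _ _ _ (by simpa using unit2 (2 * c)) (by simpa [mul_comm] using unit2 (-y)),
      K.D2 _ _ _ (by simpa [mul_comm] using unit2 (-b)) (by simpa [mul_comm] using unit2 (-b))]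
    congr 1
    have hinv : (↑v⁻¹ : R) * (1 + 2 * (2 * c)) = 1 := hv ▸ v.inv_mul
    linear_combination 2 * hk + 4 * (b - k) * hinv
  rw [K.D1 _ _ (by simpa [mul_assoc, mul_comm] using unit2 (2 * c)),
    eq_sub_of_add_eq hsum, ← two_nsmul]
  exact neg_mem (sub_mem ⟨_, rfl⟩ (ds_mem_range_nsmul_of_mem_right K hroot hgen hy _))

end DennisSteinK2

theorem dennisStein_V_filtration_divisible_general
    (p : ℕ) (R : Type) [CommRing R]
    (hhens : HenselianRing R (Ideal.span {(p : R)}))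
    (hgen : AddGenByUnits R)
    (K : DennisSteinK2 R) :
    -- if `p` is odd then `V² K₂(R) ⊆ p·K₂(R)`:
    (Odd p → ∀ x ∈ K.V p 2, ∃ y : K.K2, x = p • y) ∧
    -- in general `V³ K₂(R) ⊆ p·K₂(R)`:
    (∀ x ∈ K.V p 3, ∃ y : K.K2, x = p • y) ∧
    -- if `p = 2` and the Artin–Schreier map is surjective on `R/2R` then `V² ⊆ 2·K₂(R)`:
    (p = 2 → (∀ x : R, ∃ y : R, y ^ 2 + y - x ∈ Ideal.span {(2 : R)}) →
      ∀ x ∈ K.V p 2, ∃ y : K.K2, x = 2 • y) := by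
  have divisible {i : ℕ} (h : K.V p i ≤ (nsmulAddMonoidHom p).range) (x : K.K2)
      (hx : x ∈ K.V p i) : ∃ y, x = p • y :=
    (h hx).imp fun _ hy => hy.symm
  refine ⟨fun hodd => divisible ?_, divisible ?_, ?_⟩
  · rw [DennisSteinK2.V, if_neg (by rintro ⟨rfl, -⟩; exact absurd hodd (by decide))]
    exact K.U_le_range_nsmul hgen fun _ => exists_unit_pow_eq_one_add_of_mem_span_sq_of_odd hodd
  · rw [DennisSteinK2.V, if_neg (by omega)]
    exact K.U_le_range_nsmul hgen fun _ => exists_unit_pow_eq_one_add_of_mem_span_pow_three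
  · rintro rfl hAS
    have : HenselianRing R (Ideal.span {(2 : R)}) := by exact_mod_cast hhens
    have hroot (x : R) (hx : x ∈ Ideal.span {(2 : R) ^ 2}) :=
      exists_unit_sq_eq_one_add_of_artinSchreier hAS hx
    refine divisible ?_
    rw [DennisSteinK2.V, if_pos ⟨rfl, rfl⟩]
    refine sup_le (K.U_le_range_nsmul hgen (by exact_mod_cast hroot))
      ((AddSubgroup.closure_le _).2 ?_)
    rintro _ ⟨c, rfl⟩
    exact_mod_cast K.ds_two_mul_two_mem_range_nsmul hgen
      (HenselianRing.jac (Ideal.mem_span_singleton_self _)) hroot hAS c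

theorem dennisStein_V_filtration_divisible
    (p : ℕ) (hp : p.Prime) (R : Type) [CommRing R]
    (hhens : HenselianRing R (Ideal.span {(p : R)}))
    (hgen : AddGenByUnits R)
    (K : DennisSteinK2 R) :
    -- if `p` is odd then `V² K₂(R) ⊆ p·K₂(R)`:
    (Odd p → ∀ x ∈ K.V p 2, ∃ y : K.K2, x = p • y) ∧
    -- in general `V³ K₂(R) ⊆ p·K₂(R)`:
    (∀ x ∈ K.V p 3, ∃ y : K.K2, x = p • y) ∧
    -- if `p = 2` and the Artin–Schreier map is surjective on `R/2R` then `V² ⊆ 2·K₂(R)`: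
    (p = 2 → (∀ x : R, ∃ y : R, y ^ 2 + y - x ∈ Ideal.span {(2 : R)}) →
      ∀ x ∈ K.V p 2, ∃ y : K.K2, x = 2 • y) :=
  dennisStein_V_filtration_divisible_general p R hhens hgen K
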